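/- arXiv:2302.00983 — 2 statements merged into one kernel-verified Lean document; each statement's English description precedes it below -/
import Mathlib

section
/- Let E be a finite-dimensional real normed vector space with geometric structure B, let F : E → ℝ be differentiable with a differentiable left-gradient field gF with respect to B, let φ : ℝ → ℝ be twice differentiable, and let g : E → E be a differentiable left-gradient field of φ ∘ F with respect to B. Then for every x, trace(fderiv ℝ g x) = (deriv φ (F x)) * trace(fderiv ℝ gF x) + (deriv (deriv φ) (F x)) * B x (gF x) (gF x); that is, Δ^L_B (φ ∘ F) = φ'(F) Δ^L_B F + φ''(F) {F, F}_B. The same identity holds with right-gradient fields and the right Laplacian. -/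
/-!
A gradient field of `φ ∘ F` is forced by nondegeneracy to be `φ'(F) • gF`, since the two fields pair
with `B x` to the same covector `φ'(F x) • dF x`. The trace of the derivative of a product `c • v` is
`c · tr(Dv) + dc(v)`, and here `dc(gF) = φ''(F) · dF(gF) = φ''(F) · B(gF, gF)`. The right-handed
statement is the left-handed one for the transposed structure `x ↦ (B x).flip`.
-/

section

variable {𝕜 : Type*} [NontriviallyNormedField 𝕜]
  {E : Type*} [NormedAddCommGroup E] [NormedSpace 𝕜 E]

theorem fderiv_comp_eq_deriv_smul {φ : 𝕜 → 𝕜} {F : E → 𝕜} {x : E}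
    (hφ : DifferentiableAt 𝕜 φ (F x)) (hF : DifferentiableAt 𝕜 F x) :
    fderiv 𝕜 (φ ∘ F) x = deriv φ (F x) • fderiv 𝕜 F x :=
  (hφ.hasDerivAt.comp_hasFDerivAt x hF.hasFDerivAt).fderiv

theorem trace_fderiv_smul [FiniteDimensional 𝕜 E] {c : E → 𝕜} {v : E → E} {x : E}
    (hc : DifferentiableAt 𝕜 c x) (hv : DifferentiableAt 𝕜 v x) :
    LinearMap.trace 𝕜 E (fderiv 𝕜 (c • v) x).toLinearMap =
      c x * LinearMap.trace 𝕜 E (fderiv 𝕜 v x).toLinearMap + fderiv 𝕜 c x (v x) := by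
  rw [fderiv_smul hc hv, ContinuousLinearMap.toLinearMap_add, ContinuousLinearMap.toLinearMap_smul,
    map_add, map_smul, ContinuousLinearMap.coe_smulRight, LinearMap.trace_smulRight, smul_eq_mul]
  rfl

theorem leftGradient_comp_eq_smul (B : E → (E →ₗ[𝕜] E →ₗ[𝕜] 𝕜))
    (hB : ∀ x v, (∀ w, B x v w = 0) → v = 0)
    {φ : 𝕜 → 𝕜} (hφ : Differentiable 𝕜 φ) {F : E → 𝕜} (hF : Differentiable 𝕜 F) {gF g : E → E}
    (hgradF : ∀ x w, B x (gF x) w = fderiv 𝕜 F x w)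
    (hgrad : ∀ x w, B x (g x) w = fderiv 𝕜 (φ ∘ F) x w) :
    g = (deriv φ ∘ F) • gF := by
  funext x
  have hinj : Function.Injective (B x) := by
    rw [← LinearMap.ker_eq_bot, LinearMap.ker_eq_bot']
    exact fun v hv => hB x v fun w => LinearMap.congr_fun hv w
  refine hinj (LinearMap.ext fun w => ?_)
  simp [hgrad, hgradF, fderiv_comp_eq_deriv_smul (hφ (F x)) (hF x)]

theorem trace_fderiv_leftGradient_comp [FiniteDimensional 𝕜 E] (B : E → (E →ₗ[𝕜] E →ₗ[𝕜] 𝕜))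
    (hB : ∀ x v, (∀ w, B x v w = 0) → v = 0)
    {φ : 𝕜 → 𝕜} (hφ : Differentiable 𝕜 φ) (hφ' : Differentiable 𝕜 (deriv φ))
    {F : E → 𝕜} (hF : Differentiable 𝕜 F) {gF g : E → E} (hgF : Differentiable 𝕜 gF)
    (hgradF : ∀ x w, B x (gF x) w = fderiv 𝕜 F x w)
    (hgrad : ∀ x w, B x (g x) w = fderiv 𝕜 (φ ∘ F) x w) (x : E) :
    LinearMap.trace 𝕜 E (fderiv 𝕜 g x).toLinearMap =
      deriv φ (F x) * LinearMap.trace 𝕜 E (fderiv 𝕜 gF x).toLinearMap +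
      deriv (deriv φ) (F x) * B x (gF x) (gF x) := by
  rw [leftGradient_comp_eq_smul B hB hφ hF hgradF hgrad,
    trace_fderiv_smul ((hφ' (F x)).comp x (hF x)) (hgF x),
    fderiv_comp_eq_deriv_smul (hφ' (F x)) (hF x), hgradF]
  rfl

end

/-- Chain rule for Laplace-like operators:
`Δ^{L/R}_B (φ ∘ F) = φ'(F) Δ^{L/R}_B F + φ''(F) {F, F}_B`. -/
theorem laplacian_chain_rule
    {E : Type*} [NormedAddCommGroup E] [NormedSpace ℝ E] [FiniteDimensional ℝ E]
    (B : E → (E →ₗ[ℝ] E →ₗ[ℝ] ℝ))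
    (hB1 : ∀ x v, (∀ w, B x v w = 0) → v = 0)
    (hB2 : ∀ x w, (∀ v, B x v w = 0) → w = 0)
    (φ : ℝ → ℝ) (hφ : Differentiable ℝ φ) (hφ' : Differentiable ℝ (deriv φ))
    (F : E → ℝ) (hF : Differentiable ℝ F) :
    (∀ gF g : E → E, Differentiable ℝ gF → Differentiable ℝ g →
      (∀ x w, B x (gF x) w = fderiv ℝ F x w) →
      (∀ x w, B x (g x) w = fderiv ℝ (φ ∘ F) x w) →
      ∀ x, LinearMap.trace ℝ E (fderiv ℝ g x).toLinearMap =
        deriv φ (F x) * LinearMap.trace ℝ E (fderiv ℝ gF x).toLinearMap +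
        deriv (deriv φ) (F x) * B x (gF x) (gF x)) ∧
    (∀ gF g : E → E, Differentiable ℝ gF → Differentiable ℝ g →
      (∀ x w, B x w (gF x) = fderiv ℝ F x w) →
      (∀ x w, B x w (g x) = fderiv ℝ (φ ∘ F) x w) →
      ∀ x, LinearMap.trace ℝ E (fderiv ℝ g x).toLinearMap =
        deriv φ (F x) * LinearMap.trace ℝ E (fderiv ℝ gF x).toLinearMap +
        deriv (deriv φ) (F x) * B x (gF x) (gF x)) :=
  ⟨fun _ _ hgF _ hgradF hgrad =>
    trace_fderiv_leftGradient_comp B hB1 hφ hφ' hF hgF hgradF hgrad,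
   fun _ _ hgF _ hgradF hgrad =>
    trace_fderiv_leftGradient_comp (fun x => (B x).flip) hB2 hφ hφ' hF hgF hgradF hgrad⟩
end

section
/- Let n ∈ ℕ, let B be a geometric structure on E := EuclideanSpace ℝ (Fin n), and let F, G : E → ℝ be differentiable functions. Let gF be a left-gradient field of F with respect to B, and let gG be a C¹, compactly supported left-gradient field of G with respect to B. Assume F is bounded and the integrands below are integrable with respect to Lebesgue measure (volume). Then ∫ F x * trace(fderiv ℝ gG x) dx = − ∫ B x (gF x) (gG x) dx; that is, ∫ F · Δ^L_B G dvol = − ∫ {F, G}_B dvol (Green's identity on the boundaryless manifold ℝⁿ). -/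
/-!
The vector field `F • gG` is differentiable with compact support, and its divergence is
`F · div gG + dF(gG) = F · Δ^L_B G + {F, G}_B`. The divergence of such a field integrates to
zero: on a coordinate box containing the support in its interior, the divergence theorem leaves
only face integrals, and the field vanishes on the faces.
-/

open MeasureTheory Set

theorem LinearMap.trace_eq_sum_apply_single {R ι : Type*} [CommRing R] [Fintype ι]
    [DecidableEq ι] (A : (ι → R) →ₗ[R] ι → R) :
    LinearMap.trace R (ι → R) A = ∑ i, A (Pi.single i 1) i := by
  rw [LinearMap.trace_eq_matrix_trace R (Pi.basisFun R ι), LinearMap.toMatrix_eq_toMatrix']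
  simp [Matrix.trace, LinearMap.toMatrix'_apply]

theorem integral_divergence_eq_zero_of_hasCompactSupport {E : Type*} [NormedAddCommGroup E]
    [NormedSpace ℝ E] [CompleteSpace E] {m : ℕ} {f : (Fin (m + 1) → ℝ) → Fin (m + 1) → E}
    (hf : Differentiable ℝ f) (hsupp : HasCompactSupport f)
    (hint : Integrable fun x => ∑ i, fderiv ℝ f x (Pi.single i 1) i) :
    ∫ x, ∑ i, fderiv ℝ f x (Pi.single i 1) i = 0 := by
  obtain ⟨R, hR, hsub⟩ := hsupp.isBounded.subset_ball_lt 0 0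
  have hvanish : ∀ x : Fin (m + 1) → ℝ, R ≤ ‖x‖ → x ∉ tsupport f := fun x hx hxs =>
    (mem_ball_zero_iff.mp (hsub hxs)).not_ge hx
  have hbox : ∀ x : Fin (m + 1) → ℝ, x ∉ Icc (fun _ => -R) (fun _ => R) → R ≤ ‖x‖ := by
    intro x hx
    by_contra! hlt
    have hcoord i := abs_le.mp ((norm_le_pi_norm x i).trans hlt.le)
    exact hx ⟨fun i => (hcoord i).1, fun i => (hcoord i).2⟩
  have hface : ∀ i (c : ℝ), |c| = R → ∀ y, f (Fin.insertNth i c y) i = 0 := by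
    intro i c hc y
    have hnorm : R ≤ ‖(Fin.insertNth i c y : Fin (m + 1) → ℝ)‖ := by
      simpa [hc] using norm_le_pi_norm (Fin.insertNth i c y : Fin (m + 1) → ℝ) i
    rw [image_eq_zero_of_notMem_tsupport (hvanish _ hnorm), Pi.zero_apply]
  have hdiv := integral_divergence_of_hasFDerivAt_off_countable (fun _ => -R) (fun _ => R)
    (fun _ => by linarith) f (fderiv ℝ f) ∅ countable_empty hf.continuous.continuousOn
    (fun x _ => (hf x).hasFDerivAt) hint.integrableOn
  rw [setIntegral_eq_integral_of_forall_compl_eq_zero] at hdiv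
  · rw [hdiv]
    refine Finset.sum_eq_zero fun i _ => ?_
    simp only [hface i R (abs_of_pos hR), hface i (-R) (by rw [abs_neg, abs_of_pos hR]),
      integral_zero, sub_zero]
  · intro x hx
    simp [fderiv_of_notMem_tsupport ℝ (hvanish x (hbox x hx))]

theorem integral_trace_fderiv_pi_eq_zero_of_hasCompactSupport {n : ℕ}
    {f : (Fin n → ℝ) → Fin n → ℝ} (hf : Differentiable ℝ f) (hsupp : HasCompactSupport f)
    (hint : Integrable fun x => LinearMap.trace ℝ (Fin n → ℝ) (fderiv ℝ f x)) :
    ∫ x, LinearMap.trace ℝ (Fin n → ℝ) (fderiv ℝ f x) = 0 := by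
  cases n with
  | zero => simp [Subsingleton.elim (fderiv ℝ f _ : (Fin 0 → ℝ) →ₗ[ℝ] Fin 0 → ℝ) 0]
  | succ m =>
    simp only [LinearMap.trace_eq_sum_apply_single, ContinuousLinearMap.coe_coe] at hint ⊢
    exact integral_divergence_eq_zero_of_hasCompactSupport hf hsupp hint

theorem integral_trace_fderiv_eq_zero_of_hasCompactSupport {E : Type*} [NormedAddCommGroup E]
    [NormedSpace ℝ E] [FiniteDimensional ℝ E] [MeasurableSpace E] [BorelSpace E]
    (μ : Measure E) [μ.IsAddHaarMeasure] {f : E → E} (hf : Differentiable ℝ f)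
    (hsupp : HasCompactSupport f)
    (hint : Integrable (fun x => LinearMap.trace ℝ E (fderiv ℝ f x)) μ) :
    ∫ x, LinearMap.trace ℝ E (fderiv ℝ f x) ∂μ = 0 := by
  let e : E ≃L[ℝ] Fin (Module.finrank ℝ E) → ℝ :=
    ContinuousLinearEquiv.ofFinrankEq (Module.finrank_fin_fun ℝ).symm
  let g := fun y => e (f (e.symm y))
  have hg : ∀ y, HasFDerivAt g ((e : E →L[ℝ] _).comp ((fderiv ℝ f (e.symm y)).comp
      (e.symm : _ →L[ℝ] E))) y := fun y =>
    e.hasFDerivAt.comp y ((hf _).hasFDerivAt.comp y e.symm.hasFDerivAt)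
  have htrace : ∀ y, LinearMap.trace ℝ (Fin (Module.finrank ℝ E) → ℝ) (fderiv ℝ g y) =
      LinearMap.trace ℝ E (fderiv ℝ f (e.symm y)) := fun y => by
    rw [(hg y).fderiv, ← LinearMap.trace_conj' _ e.toLinearEquiv]
    rfl
  have hemb : MeasurableEmbedding e.symm := e.symm.toHomeomorph.measurableEmbedding
  let ν := Measure.map e.symm volume
  obtain ⟨c, hc, hνμ⟩ : ∃ c : NNReal, 0 < c ∧ ν = c • μ :=
    ⟨_, Measure.addHaarScalarFactor_pos_of_isAddHaarMeasure ν μ,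
      Measure.isAddLeftInvariant_eq_smul ν μ⟩
  have hν : ∫ x, LinearMap.trace ℝ E (fderiv ℝ f x) ∂ν = 0 := by
    rw [hemb.integral_map]
    simp only [← htrace]
    refine integral_trace_fderiv_pi_eq_zero_of_hasCompactSupport
      (fun y => (hg y).differentiableAt) ((hsupp.comp_homeomorph e.symm.toHomeomorph).comp_left
        e.map_zero) ?_
    simp only [htrace]
    exact hemb.integrable_map_iff.mp (hνμ ▸ hint.smul_measure_nnreal)
  rw [hνμ, integral_smul_nnreal_measure] at hν
  exact (smul_eq_zero.mp hν).resolve_left hc.ne'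

theorem trace_fderiv_smul_s17 {E : Type*} [NormedAddCommGroup E] [NormedSpace ℝ E]
    [FiniteDimensional ℝ E] {F : E → ℝ} {g : E → E} {x : E} (hF : DifferentiableAt ℝ F x)
    (hg : DifferentiableAt ℝ g x) :
    LinearMap.trace ℝ E (fderiv ℝ (fun y => F y • g y) x) =
      F x * LinearMap.trace ℝ E (fderiv ℝ g x) + fderiv ℝ F x (g x) := by
  rw [fderiv_fun_smul hF hg]
  simp

theorem green_identity_euclidean_general {n : ℕ}
    (B : EuclideanSpace ℝ (Fin n) →
      (EuclideanSpace ℝ (Fin n) →ₗ[ℝ] EuclideanSpace ℝ (Fin n) →ₗ[ℝ] ℝ))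
    (F : EuclideanSpace ℝ (Fin n) → ℝ)
    (hF : Differentiable ℝ F)
    (gF gG : EuclideanSpace ℝ (Fin n) → EuclideanSpace ℝ (Fin n))
    (hgFgrad : ∀ x w, B x (gF x) w = fderiv ℝ F x w)
    (hgG : ContDiff ℝ 1 gG) (hgGsupp : HasCompactSupport gG)
    (hint1 : Integrable (fun x => F x *
      LinearMap.trace ℝ (EuclideanSpace ℝ (Fin n)) (fderiv ℝ gG x).toLinearMap))
    (hint2 : Integrable (fun x => B x (gF x) (gG x))) :
    ∫ x, F x * LinearMap.trace ℝ (EuclideanSpace ℝ (Fin n)) (fderiv ℝ gG x).toLinearMap =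
      - ∫ x, B x (gF x) (gG x) := by
  have hgGd : Differentiable ℝ gG := hgG.differentiable one_ne_zero
  have hdiv : ∀ x, LinearMap.trace ℝ _ (fderiv ℝ (fun y => F y • gG y) x).toLinearMap =
      F x * LinearMap.trace ℝ _ (fderiv ℝ gG x).toLinearMap + B x (gF x) (gG x) := fun x => by
    rw [trace_fderiv_smul_s17 (hF x) (hgGd x), hgFgrad]
  have hfd : Differentiable ℝ fun y => F y • gG y := hF.smul hgGd
  have hfs : HasCompactSupport fun y => F y • gG y := hgGsupp.smul_left (f := F)
  have hfi : Integrable fun x =>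
      LinearMap.trace ℝ _ (fderiv ℝ (fun y => F y • gG y) x).toLinearMap := by
    simp only [hdiv]
    exact hint1.add hint2
  have hzero := integral_trace_fderiv_eq_zero_of_hasCompactSupport volume hfd hfs hfi
  simp only [hdiv] at hzero
  rw [integral_add hint1 hint2] at hzero
  linarith

/-- Green's identity on the boundaryless manifold `ℝⁿ`:
`∫ F · Δ^L_B G dvol = − ∫ {F, G}_B dvol`. -/
theorem green_identity_euclidean {n : ℕ}
    (B : EuclideanSpace ℝ (Fin n) →
      (EuclideanSpace ℝ (Fin n) →ₗ[ℝ] EuclideanSpace ℝ (Fin n) →ₗ[ℝ] ℝ))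
    (hB1 : ∀ x v, (∀ w, B x v w = 0) → v = 0)
    (hB2 : ∀ x w, (∀ v, B x v w = 0) → w = 0)
    (F G : EuclideanSpace ℝ (Fin n) → ℝ)
    (hF : Differentiable ℝ F) (hG : Differentiable ℝ G)
    (gF gG : EuclideanSpace ℝ (Fin n) → EuclideanSpace ℝ (Fin n))
    (hgFgrad : ∀ x w, B x (gF x) w = fderiv ℝ F x w)
    (hgGgrad : ∀ x w, B x (gG x) w = fderiv ℝ G x w)
    (hgG : ContDiff ℝ 1 gG) (hgGsupp : HasCompactSupport gG)
    (hFbd : ∃ C, ∀ x, |F x| ≤ C)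
    (hint1 : Integrable (fun x => F x *
      LinearMap.trace ℝ (EuclideanSpace ℝ (Fin n)) (fderiv ℝ gG x).toLinearMap))
    (hint2 : Integrable (fun x => B x (gF x) (gG x))) :
    ∫ x, F x * LinearMap.trace ℝ (EuclideanSpace ℝ (Fin n)) (fderiv ℝ gG x).toLinearMap =
      - ∫ x, B x (gF x) (gG x) :=
  green_identity_euclidean_general B F hF gF gG hgFgrad hgG hgGsupp hint1 hint2
end
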